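/- arXiv:2109.00021 — 4 statements merged into one kernel-verified Lean document; each statement's English description precedes it below -/
import Mathlib

section
/- Let μ be a measure on the boundary of the dyadic tree T of depth N. If V^μ(α) ≤ 1 for every α in supp μ, then V^μ(α) ≤ 1 for every α ∈ T (the maximum principle holds on a simple tree). -/
open Finset

/-- The set of binary strings of length at most `N` (vertices of the dyadic tree of depth `N`).
The order on the tree is: `α ≤ β` iff `β` is a prefix of `α` (`β <+: α`); the root is `[]`. -/
def strings : ℕ → Finset (List Bool)
  | 0 => {([] : List Bool)}
  | N + 1 =>
      {([] : List Bool)} ∪ (strings N).image (List.cons true) ∪ (strings N).image (List.cons false)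

/-- `𝕀 f (α) = ∑_{α' ≥ α} f α'`, i.e. the sum of `f` over the prefixes of `α`. -/
noncomputable def treeI (N : ℕ) (f : List Bool → ℝ) (α : List Bool) : ℝ :=
  ∑ β ∈ (strings N).filter (fun β => β <+: α), f β

/-- `𝕀* f (α) = ∑_{α' ≤ α} f α'`, i.e. the sum of `f` over the strings extending `α`. -/
noncomputable def treeIstar (N : ℕ) (f : List Bool → ℝ) (α : List Bool) : ℝ :=
  ∑ β ∈ (strings N).filter (fun β => α <+: β), f β

/-- The potential `V^μ = 𝕀 (𝕀* μ)`. -/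
noncomputable def treeV (N : ℕ) (μ : List Bool → ℝ) : List Bool → ℝ :=
  treeI N (treeIstar N μ)

/-- The total mass `|μ|`. -/
noncomputable def treeMass (N : ℕ) (μ : List Bool → ℝ) : ℝ :=
  ∑ α ∈ strings N, μ α

/-- A measure on the boundary `∂T` of the dyadic tree of depth `N`: a nonnegative function
vanishing off the strings of length exactly `N`. -/
def IsMeasureOnBoundary (N : ℕ) (μ : List Bool → ℝ) : Prop :=
  (∀ α, 0 ≤ μ α) ∧ ∀ α, μ α ≠ 0 → α.length = N

/-!
If `𝕀*μ(α) > 0`, some point `ω` of `supp μ` lies below `α`, and since `V^μ` only grows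
going down the tree, `V^μ(α) ≤ V^μ(ω) ≤ 1`. For an arbitrary `α`, the terms of
`V^μ(α) = ∑_{γ ≥ α} 𝕀*μ(γ)` vanish except at the charged vertices `γ ≥ α` (those with
`𝕀*μ(γ) > 0`); these form a chain, so their sum is at most `V^μ(γ₀)` for the lowest of them.
-/

section

variable {N : ℕ} {μ : List Bool → ℝ}

lemma treeIstar_nonneg (hμ : ∀ α, 0 ≤ μ α) (α : List Bool) : 0 ≤ treeIstar N μ α :=
  sum_nonneg fun β _ => hμ β

lemma treeV_mono (hμ : ∀ α, 0 ≤ μ α) {α β : List Bool} (hαβ : α <+: β) :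
    treeV N μ α ≤ treeV N μ β :=
  sum_le_sum_of_subset_of_nonneg (monotone_filter_right _ fun _ _ hγ => hγ.trans hαβ)
    fun γ _ _ => treeIstar_nonneg hμ γ

lemma exists_pos_of_treeIstar_pos {α : List Bool} (h : 0 < treeIstar N μ α) :
    ∃ ω ∈ strings N, α <+: ω ∧ 0 < μ ω := by
  rw [treeIstar, ← sum_const_zero] at h
  obtain ⟨ω, hω, hpos⟩ := exists_lt_of_sum_lt h
  exact ⟨ω, (mem_filter.1 hω).1, (mem_filter.1 hω).2, hpos⟩

lemma treeV_le_of_forall_treeIstar_pos (hμ : ∀ α, 0 ≤ μ α) {c : ℝ} (hc : 0 ≤ c)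
    (h : ∀ γ, 0 < treeIstar N μ γ → treeV N μ γ ≤ c) (α : List Bool) :
    treeV N μ α ≤ c := by
  set charged := ((strings N).filter (· <+: α)).filter (0 < treeIstar N μ ·)
  have hV : treeV N μ α = ∑ γ ∈ charged, treeIstar N μ γ :=
    (sum_filter_of_ne fun γ _ hγ => (treeIstar_nonneg hμ γ).lt_of_ne' hγ).symm
  rcases charged.eq_empty_or_nonempty with hempty | hne
  · simpa [hV, hempty] using hc
  obtain ⟨γ₀, hγ₀, hlowest⟩ := exists_max_image charged List.length hne
  simp only [charged, mem_filter] at hγ₀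
  have hchain : charged ⊆ (strings N).filter (· <+: γ₀) := fun γ hγ => by
    have hlen := hlowest γ hγ
    simp only [charged, mem_filter] at hγ ⊢
    exact ⟨hγ.1.1, List.prefix_of_prefix_length_le hγ.1.2 hγ₀.1.2 hlen⟩
  calc treeV N μ α = ∑ γ ∈ charged, treeIstar N μ γ := hV
    _ ≤ treeV N μ γ₀ :=
      sum_le_sum_of_subset_of_nonneg hchain fun γ _ _ => treeIstar_nonneg hμ γ
    _ ≤ c := h γ₀ hγ₀.2

end

theorem stmt0_general (N : ℕ) (μ : List Bool → ℝ)
    (hμ : IsMeasureOnBoundary N μ)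
    (hsupp : ∀ α, 0 < μ α → treeV N μ α ≤ 1) :
    ∀ α ∈ strings N, treeV N μ α ≤ 1 := by
  intro α _
  refine treeV_le_of_forall_treeIstar_pos hμ.1 zero_le_one (fun γ hγ => ?_) α
  obtain ⟨ω, -, hγω, hω⟩ := exists_pos_of_treeIstar_pos hγ
  exact (treeV_mono hμ.1 hγω).trans (hsupp ω hω)

/-- **Maximum principle on the tree.** If `V^μ ≤ 1` on the support of a measure `μ` on `∂T`,
then `V^μ ≤ 1` everywhere on `T`. -/
theorem stmt0 (N : ℕ) (hN : 1 ≤ N) (μ : List Bool → ℝ)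
    (hμ : IsMeasureOnBoundary N μ)
    (hsupp : ∀ α, 0 < μ α → treeV N μ α ≤ 1) :
    ∀ α ∈ strings N, treeV N μ α ≤ 1 :=
  stmt0_general N μ hμ hsupp
end

section
/- Let μ be a measure on the boundary of the dyadic tree T of depth N and let δ > 0. Then the partial energy satisfies E_δ[μ] = ∑_{α∈T : V^μ(α) ≤ δ} (𝕀*μ(α))² ≤ δ·|μ|. -/
open Finset

/-- **Partial energy estimate on the tree.**
`E_δ[μ] = ∑_{α : V^μ(α) ≤ δ} (𝕀*μ(α))² ≤ δ·|μ|`. -/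
theorem stmt3 (N : ℕ) (hN : 1 ≤ N) (μ : List Bool → ℝ)
    (hμ : IsMeasureOnBoundary N μ) (δ : ℝ) (hδ : 0 < δ) :
    ∑ α ∈ (strings N).filter (fun α => treeV N μ α ≤ δ), (treeIstar N μ α) ^ 2
      ≤ δ * treeMass N μ := by
  obtain ⟨hpos, _⟩ := hμ
  have hI : ∀ α, 0 ≤ treeIstar N μ α := fun α =>
    Finset.sum_nonneg fun β _ => hpos β
  set A := (strings N).filter (fun α => treeV N μ α ≤ δ) with hA
  -- key estimate: for each β, the sum of 𝕀*μ over prefixes α of β with V(α) ≤ δ is ≤ δ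
  have key : ∀ β : List Bool,
      ∑ α ∈ A.filter (fun α => α <+: β), treeIstar N μ α ≤ δ := by
    intro β
    set S := A.filter (fun α => α <+: β) with hS
    rcases S.eq_empty_or_nonempty with h | h
    · simp [h, le_of_lt hδ]
    · obtain ⟨α₀, hα₀S, hmax⟩ := S.exists_max_image (fun α => α.length) h
      have hα₀ : α₀ ∈ strings N ∧ treeV N μ α₀ ≤ δ := by
        have := Finset.mem_filter.mp (Finset.mem_filter.mp hα₀S).1
        exact this
      have hα₀β : α₀ <+: β := (Finset.mem_filter.mp hα₀S).2
      calc ∑ α ∈ S, treeIstar N μ α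
          ≤ ∑ α ∈ (strings N).filter (fun γ => γ <+: α₀), treeIstar N μ α := by
            apply Finset.sum_le_sum_of_subset_of_nonneg
            · intro γ hγ
              have hγ1 := Finset.mem_filter.mp hγ
              have hγ2 := Finset.mem_filter.mp hγ1.1
              exact Finset.mem_filter.mpr ⟨hγ2.1,
                List.prefix_of_prefix_length_le hγ1.2 hα₀β (hmax γ hγ)⟩
            · intro γ _ _; exact hI γ
        _ = treeV N μ α₀ := rfl
        _ ≤ δ := hα₀.2
  calc ∑ α ∈ A, (treeIstar N μ α) ^ 2
      = ∑ α ∈ A, ∑ β ∈ (strings N).filter (fun β => α <+: β),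
          treeIstar N μ α * μ β := by
        refine Finset.sum_congr rfl fun α _ => ?_
        rw [sq, treeIstar, Finset.mul_sum]
    _ = ∑ α ∈ A, ∑ β ∈ strings N,
          if α <+: β then treeIstar N μ α * μ β else 0 := by
        refine Finset.sum_congr rfl fun α _ => ?_
        rw [Finset.sum_filter]
    _ = ∑ β ∈ strings N, ∑ α ∈ A,
          if α <+: β then treeIstar N μ α * μ β else 0 := Finset.sum_comm
    _ = ∑ β ∈ strings N, ∑ α ∈ A.filter (fun α => α <+: β),
          treeIstar N μ α * μ β := by
        refine Finset.sum_congr rfl fun β _ => ?_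
        rw [hA, Finset.filter_filter, Finset.sum_filter, Finset.sum_filter]
        refine Finset.sum_congr rfl fun α _ => ?_
        by_cases h1 : treeV N μ α ≤ δ <;> by_cases h2 : α <+: β <;> simp [h1, h2]
    _ = ∑ β ∈ strings N, (∑ α ∈ A.filter (fun α => α <+: β),
          treeIstar N μ α) * μ β := by
        refine Finset.sum_congr rfl fun β _ => ?_
        rw [Finset.sum_mul]
    _ ≤ ∑ β ∈ strings N, δ * μ β := by
        refine Finset.sum_le_sum fun β _ => ?_
        exact mul_le_mul_of_nonneg_right (key β) (hpos β)
    _ = δ * treeMass N μ := by rw [treeMass, Finset.mul_sum]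
end

section
/- Small energy majorization fails on the bi-tree: for every constant C > 0 there exist an integer N ≥ 1, functions f, g : T² → [0,∞) on the bi-tree T² of depth N with g superadditive in each variable, and numbers δ > 0 and λ ≥ 10δ, such that f is supported in {α : 𝕀g(α) ≤ δ}, and yet NO function φ : T² → [0,∞) satisfies both (1) 𝕀φ(α) ≥ 𝕀f(α) for every α with 2λ ≤ 𝕀g(α) ≤ 4λ, and (2) ∑_{α∈T²} φ(α)² ≤ C·(δ/λ)·∑_{α∈T²} f(α)². Moreover f can be taken to be the indicator of the root and g = 𝕀*ν for a measure ν on ∂T². -/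
open Finset

/-- Vertices of the bi-tree `T²` of depth `N`: pairs of binary strings of length at most `N`,
ordered by `(α,β) ≤ (α',β')` iff `α' <+: α` and `β' <+: β`. -/
def biVertices (N : ℕ) : Finset (List Bool × List Bool) := strings N ×ˢ strings N

/-- `𝕀 f (p) = ∑_{p' ≥ p} f p'`. -/
noncomputable def biI (N : ℕ) (f : List Bool × List Bool → ℝ) (p : List Bool × List Bool) : ℝ :=
  ∑ q ∈ (biVertices N).filter (fun q => q.1 <+: p.1 ∧ q.2 <+: p.2), f q

/-- `𝕀* f (p) = ∑_{p' ≤ p} f p'`. -/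
noncomputable def biIstar (N : ℕ) (f : List Bool × List Bool → ℝ) (p : List Bool × List Bool) : ℝ :=
  ∑ q ∈ (biVertices N).filter (fun q => p.1 <+: q.1 ∧ p.2 <+: q.2), f q

/-- The potential `V^μ = 𝕀 (𝕀* μ)` on the bi-tree. -/
noncomputable def biV (N : ℕ) (μ : List Bool × List Bool → ℝ) : List Bool × List Bool → ℝ :=
  biI N (biIstar N μ)

/-- The total mass `|μ|`. -/
noncomputable def biMass (N : ℕ) (μ : List Bool × List Bool → ℝ) : ℝ :=
  ∑ p ∈ biVertices N, μ p

/-- A measure on the boundary `∂T²`: a nonnegative function vanishing off pairs of strings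
both of length exactly `N`. -/
def IsBiMeasureOnBoundary (N : ℕ) (μ : List Bool × List Bool → ℝ) : Prop :=
  (∀ p, 0 ≤ μ p) ∧ ∀ p, μ p ≠ 0 → p.1.length = N ∧ p.2.length = N

/-- The energy `E[ν] = ∑_{α∈T²} (𝕀*ν(α))²`. -/
noncomputable def biEnergy (N : ℕ) (ν : List Bool × List Bool → ℝ) : ℝ :=
  ∑ p ∈ biVertices N, (biIstar N ν p) ^ 2

/-- The partial energy `E_ε[ν] = ∑_{α∈T² : V^ν(α) ≤ ε} (𝕀*ν(α))²`. -/
noncomputable def biPartialEnergy (N : ℕ) (ν : List Bool × List Bool → ℝ) (ε : ℝ) : ℝ :=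
  ∑ p ∈ (biVertices N).filter (fun p => biV N ν p ≤ ε), (biIstar N ν p) ^ 2

/-- `cap(E) = inf { ∑ f² : f ≥ 0, 𝕀f ≥ 1 on E }` on the bi-tree of depth `N`. -/
noncomputable def biCap (N : ℕ) (E : Set (List Bool × List Bool)) : ℝ :=
  sInf { t : ℝ | ∃ f : List Bool × List Bool → ℝ, (∀ p, 0 ≤ f p) ∧
    (∀ p ∈ E, 1 ≤ biI N f p) ∧ t = ∑ p ∈ biVertices N, (f p) ^ 2 }

/-- Superadditivity in each variable on the bi-tree of depth `N`. -/
def BiSuperadditive (N : ℕ) (g : List Bool × List Bool → ℝ) : Prop :=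
  (∀ α β : List Bool, α.length < N → β.length ≤ N →
    g (α ++ [false], β) + g (α ++ [true], β) ≤ g (α, β)) ∧
  (∀ α β : List Bool, α.length ≤ N → β.length < N →
    g (α, β ++ [false]) + g (α, β ++ [true]) ≤ g (α, β))

lemma mem_strings : ∀ (N : ℕ) (x : List Bool), x ∈ strings N ↔ x.length ≤ N := by
  intro N
  induction N with
  | zero => intro x; simp [strings, List.length_eq_zero_iff]
  | succ N ih =>
    intro x
    cases x with
    | nil => simp [strings]
    | cons b t =>
      cases b <;> simp [strings, List.cons_injective, ih, Nat.succ_le_succ_iff]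

lemma prefix_rep {x : List Bool} {a : ℕ} :
    x <+: List.replicate a true ↔ x = List.replicate x.length true ∧ x.length ≤ a := by
  constructor
  · intro h
    have hl : x.length ≤ a := by simpa using h.length_le
    refine ⟨?_, hl⟩
    have := List.prefix_iff_eq_take.mp h
    conv_lhs => rw [this, List.take_replicate]
    rw [Nat.min_eq_left hl]
  · rintro ⟨h1, h2⟩
    refine ⟨List.replicate (a - x.length) true, ?_⟩
    rw [h1, ← List.replicate_add]
    simp only [List.length_replicate]
    congr 1
    omega

lemma rep_injective : Function.Injective (fun i => List.replicate i true) := by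
  intro i j h
  have := congrArg List.length h
  simpa using this

lemma filter_strings (N a : ℕ) (ha : a ≤ N) :
    (strings N).filter (fun x => x <+: List.replicate a true) =
      (Finset.range (a+1)).image (fun i => List.replicate i true) := by
  ext x
  simp only [Finset.mem_filter, mem_strings, Finset.mem_image, Finset.mem_range, prefix_rep]
  constructor
  · rintro ⟨_, h1, h2⟩
    exact ⟨x.length, by omega, h1.symm⟩
  · rintro ⟨i, hi, rfl⟩
    simp only [List.length_replicate]
    exact ⟨by omega, by trivial, by omega⟩

lemma count_lemma (N a b : ℕ) (ha : a ≤ N) (hb : b ≤ N) :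
    ((biVertices N).filter
      (fun q => q.1 <+: List.replicate a true ∧ q.2 <+: List.replicate b true)).card
      = (a+1)*(b+1) := by
  have heq : (biVertices N).filter
      (fun q => q.1 <+: List.replicate a true ∧ q.2 <+: List.replicate b true)
      = ((strings N).filter (fun x => x <+: List.replicate a true)) ×ˢ
        ((strings N).filter (fun x => x <+: List.replicate b true)) := by
    ext ⟨x, y⟩
    simp only [biVertices, Finset.mem_filter, Finset.mem_product]
    tauto
  rw [heq, Finset.card_product,
    filter_strings N a ha, filter_strings N b hb,
    Finset.card_image_of_injective _ rep_injective,
    Finset.card_image_of_injective _ rep_injective,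
    Finset.card_range, Finset.card_range]

lemma prefix_rep_min {x : List Bool} {a b : ℕ} :
    (x <+: List.replicate a true ∧ x <+: List.replicate b true) ↔
      x <+: List.replicate (min a b) true := by
  simp only [prefix_rep]
  constructor
  · rintro ⟨⟨h1, h2⟩, ⟨_, h3⟩⟩; exact ⟨h1, le_min h2 h3⟩
  · rintro ⟨h1, h2⟩
    exact ⟨⟨h1, h2.trans (min_le_left _ _)⟩, ⟨h1, h2.trans (min_le_right _ _)⟩⟩

-- indicator sums
lemma biIstar_point (N : ℕ) (p : List Bool × List Bool) :
    biIstar N (fun q => if q = (List.replicate N true, List.replicate N true) then (1:ℝ) else 0) p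
      = if (p.1 <+: List.replicate N true ∧ p.2 <+: List.replicate N true) then 1 else 0 := by
  rw [biIstar, Finset.sum_ite_eq' _ (List.replicate N true, List.replicate N true) (fun _ => (1:ℝ))]
  congr 1
  simp [Finset.mem_filter, biVertices, mem_strings]

lemma biI_root (N : ℕ) (p : List Bool × List Bool) :
    biI N (fun q => if q = (([] : List Bool), ([] : List Bool)) then (1:ℝ) else 0) p
      = 1 := by
  rw [biI, Finset.sum_ite_eq' _ (([] : List Bool), ([] : List Bool)) (fun _ => (1:ℝ))]
  simp [Finset.mem_filter, biVertices, mem_strings]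

lemma geom_bound (n j : ℕ) (hj : j ≤ n) :
    ∑ j' ∈ Finset.range (n+1), (2:ℝ)^(min j j') * 2^(n - max j j') ≤ 4 * 2^n := by
  rw [← Finset.sum_filter_add_sum_filter_not (Finset.range (n+1)) (fun j' => j' ≤ j)
      (fun j' => (2:ℝ)^(min j j') * 2^(n - max j j'))]
  have hf1 : (Finset.range (n+1)).filter (fun j' => j' ≤ j) = Finset.range (j+1) := by
    ext j'; simp only [Finset.mem_filter, Finset.mem_range]; omega
  have hS1 : ∑ j' ∈ (Finset.range (n+1)).filter (fun j' => j' ≤ j),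
      (2:ℝ)^(min j j') * 2^(n - max j j') ≤ 2 * 2^n := by
    rw [hf1]
    have : ∀ j' ∈ Finset.range (j+1),
        (2:ℝ)^(min j j') * 2^(n - max j j') = 2^(n-j) * 2^j' := by
      intro j' hj'
      simp only [Finset.mem_range] at hj'
      rw [min_eq_right (by omega), max_eq_left (by omega), mul_comm]
    rw [Finset.sum_congr rfl this, ← Finset.mul_sum, geom_sum_eq (by norm_num) (j+1)]
    have h2 : ((2:ℝ)^(j+1) - 1) / (2 - 1) ≤ 2^(j+1) := by norm_num
    calc (2:ℝ)^(n-j) * (((2:ℝ)^(j+1) - 1) / (2-1)) ≤ 2^(n-j) * 2^(j+1) := by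
          exact mul_le_mul_of_nonneg_left h2 (by positivity)
      _ = 2 * 2^n := by
          rw [← pow_add]
          rw [show n - j + (j+1) = n + 1 by omega]
          ring
  have hS2 : ∑ j' ∈ (Finset.range (n+1)).filter (fun j' => ¬ j' ≤ j),
      (2:ℝ)^(min j j') * 2^(n - max j j') ≤ 2^n := by
    have : ∀ j' ∈ (Finset.range (n+1)).filter (fun j' => ¬ j' ≤ j),
        (2:ℝ)^(min j j') * 2^(n - max j j') = 2^j * 2^(n - j') := by
      intro j' hj'
      simp only [Finset.mem_filter, Finset.mem_range] at hj'
      rw [min_eq_left (by omega), max_eq_right (by omega)]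
    rw [Finset.sum_congr rfl this, ← Finset.mul_sum]
    have hre : ∑ j' ∈ (Finset.range (n+1)).filter (fun j' => ¬ j' ≤ j), (2:ℝ)^(n - j')
        = ∑ k ∈ Finset.range (n - j), (2:ℝ)^(k+1) / 2 := by
      refine Finset.sum_nbij' (fun j' => n - j') (fun k => n - k) ?_ ?_ ?_ ?_ ?_
      · intro a ha; simp only [Finset.mem_filter, Finset.mem_range] at *; omega
      · intro a ha; simp only [Finset.mem_filter, Finset.mem_range] at *; omega
      · intro a ha; simp only [Finset.mem_filter, Finset.mem_range] at ha; omega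
      · intro a ha; simp only [Finset.mem_range] at ha; omega
      · intro a ha
        simp only [Finset.mem_filter, Finset.mem_range] at ha
        rw [show n - a + 1 = n - a + 1 from rfl, pow_succ]
        field_simp
    rw [hre]
    have : ∑ k ∈ Finset.range (n - j), (2:ℝ)^(k+1) / 2 = ∑ k ∈ Finset.range (n-j), (2:ℝ)^k := by
      refine Finset.sum_congr rfl (fun k _ => ?_)
      rw [pow_succ]; ring
    rw [this, geom_sum_eq (by norm_num) (n-j)]
    have : ((2:ℝ)^(n-j) - 1) / (2 - 1) ≤ 2^(n-j) := by norm_num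
    calc (2:ℝ)^j * (((2:ℝ)^(n-j) - 1)/(2-1)) ≤ 2^j * 2^(n-j) :=
          mul_le_mul_of_nonneg_left this (by positivity)
      _ = 2^n := by rw [← pow_add, show j + (n-j) = n by omega]
  calc _ ≤ 2*(2:ℝ)^n + 2^n := add_le_add hS1 hS2
    _ ≤ 4 * 2^n := by nlinarith [pow_pos (show (0:ℝ) < 2 by norm_num) n]

lemma rep_prefix_rep {a N : ℕ} (h : a ≤ N) :
    List.replicate a true <+: List.replicate N true :=
  prefix_rep.mpr ⟨by simp, by simpa using h⟩

lemma biV_rep (N a b : ℕ) (ha : a ≤ N) (hb : b ≤ N) :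
    biI N (biIstar N (fun q =>
        if q = (List.replicate N true, List.replicate N true) then (1:ℝ) else 0))
      (List.replicate a true, List.replicate b true) = (a+1)*(b+1) := by
  rw [biI]
  have h1 : ∀ q ∈ (biVertices N).filter
      (fun q => q.1 <+: (List.replicate a true, List.replicate b true).1 ∧
        q.2 <+: (List.replicate a true, List.replicate b true).2),
      biIstar N (fun q =>
        if q = (List.replicate N true, List.replicate N true) then (1:ℝ) else 0) q = 1 := by
    intro q hq
    simp only [Finset.mem_filter] at hq
    rw [biIstar_point, if_pos ⟨hq.2.1.trans (rep_prefix_rep ha),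
      hq.2.2.trans (rep_prefix_rep hb)⟩]
  rw [Finset.sum_congr rfl h1, Finset.sum_const, nsmul_eq_mul, mul_one, count_lemma N a b ha hb]
  push_cast
  ring

lemma app_false_not_prefix (α : List Bool) (N : ℕ) :
    ¬ (α ++ [false]) <+: List.replicate N true := by
  intro h
  have hmem : (false : Bool) ∈ List.replicate N true := h.subset (by simp)
  simpa using List.eq_of_mem_replicate hmem

lemma superadd (N : ℕ) : BiSuperadditive N (biIstar N (fun q =>
    if q = (List.replicate N true, List.replicate N true) then (1:ℝ) else 0)) := by
  constructor
  · intro α β _ _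
    rw [biIstar_point, biIstar_point, biIstar_point]
    rw [if_neg (fun h => app_false_not_prefix α N h.1)]
    split_ifs with h1 h2
    · norm_num
    · exact absurd ⟨(List.prefix_append α [true]).trans h1.1, h1.2⟩ h2
    · norm_num
    · norm_num
  · intro α β _ _
    rw [biIstar_point, biIstar_point, biIstar_point]
    rw [if_neg (fun h => app_false_not_prefix β N h.2)]
    split_ifs with h1 h2
    · norm_num
    · exact absurd ⟨h1.1, (List.prefix_append β [true]).trans h1.2⟩ h2
    · norm_num
    · norm_num

lemma ite_one_mul_ite_one {A B : Prop} [Decidable A] [Decidable B] :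
    (if A then (1:ℝ) else 0) * (if B then (1:ℝ) else 0) = if A ∧ B then (1:ℝ) else 0 := by
  split_ifs <;> simp_all

lemma min_pow_sub (j j' : ℕ) : min (2^j - 1) (2^j' - 1) = 2^(min j j') - 1 := by
  rcases le_total j j' with h | h
  · rw [min_eq_left h, min_eq_left (by have := Nat.pow_le_pow_right (by norm_num : 1 ≤ 2) h; omega)]
  · rw [min_eq_right h, min_eq_right (by have := Nat.pow_le_pow_right (by norm_num : 1 ≤ 2) h; omega)]

lemma count_pair (N n j j' : ℕ) (hj : j ≤ n) (hj' : j' ≤ n) (hN : 2^n - 1 ≤ N) :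
    ∑ q ∈ biVertices N,
      ((if (q.1 <+: List.replicate (2^j-1) true ∧ q.2 <+: List.replicate (2^(n-j)-1) true)
          then (1:ℝ) else 0) *
       (if (q.1 <+: List.replicate (2^j'-1) true ∧ q.2 <+: List.replicate (2^(n-j')-1) true)
          then (1:ℝ) else 0))
      = (2:ℝ)^(min j j') * 2^(n - max j j') := by
  have e1 : min (2^j-1) (2^j'-1) = 2^(min j j') - 1 := min_pow_sub j j'
  have e2 : min (2^(n-j)-1) (2^(n-j')-1) = 2^(n - max j j') - 1 := by
    rw [min_pow_sub]
    congr 2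
    omega
  have key : ∀ q ∈ biVertices N,
      ((if (q.1 <+: List.replicate (2^j-1) true ∧ q.2 <+: List.replicate (2^(n-j)-1) true)
          then (1:ℝ) else 0) *
       (if (q.1 <+: List.replicate (2^j'-1) true ∧ q.2 <+: List.replicate (2^(n-j')-1) true)
          then (1:ℝ) else 0))
      = if (q.1 <+: List.replicate (2^(min j j')-1) true ∧
            q.2 <+: List.replicate (2^(n - max j j')-1) true) then (1:ℝ) else 0 := by
    intro q _
    rw [ite_one_mul_ite_one]
    refine if_congr ?_ rfl rfl
    rw [← e1, ← e2, ← prefix_rep_min, ← prefix_rep_min]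
    tauto
  rw [Finset.sum_congr rfl key, Finset.sum_boole]
  have hb1 : 2^(min j j') - 1 ≤ N :=
    le_trans (by have := Nat.pow_le_pow_right (by norm_num : 1 ≤ 2) (min_le_left j j' |>.trans hj); omega) hN
  have hb2 : 2^(n - max j j') - 1 ≤ N :=
    le_trans (by have := Nat.pow_le_pow_right (by norm_num : 1 ≤ 2) (show n - max j j' ≤ n by omega); omega) hN
  rw [count_lemma N _ _ hb1 hb2]
  have c1 : 2^(min j j') - 1 + 1 = 2^(min j j') := Nat.sub_add_cancel Nat.one_le_two_pow
  have c2 : 2^(n - max j j') - 1 + 1 = 2^(n - max j j') := Nat.sub_add_cancel Nat.one_le_two_pow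
  rw [c1, c2]
  push_cast
  ring

/-- **Small energy majorization fails on the bi-tree** (with `f` the indicator of the root
and `g = 𝕀*ν` for a measure `ν` on `∂T²`). -/
theorem stmt5 : ∀ C : ℝ, 0 < C →
    ∃ N : ℕ, 1 ≤ N ∧
    ∃ ν : List Bool × List Bool → ℝ, IsBiMeasureOnBoundary N ν ∧
    ∃ δ lam : ℝ, 0 < δ ∧ 10 * δ ≤ lam ∧
      BiSuperadditive N (biIstar N ν) ∧
      (∀ p ∈ biVertices N,
        (fun q : List Bool × List Bool => if q = (([] : List Bool), ([] : List Bool)) then (1 : ℝ) else 0) p ≠ 0 →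
        biI N (biIstar N ν) p ≤ δ) ∧
      ¬ ∃ φ : List Bool × List Bool → ℝ, (∀ p, 0 ≤ φ p) ∧
        (∀ p ∈ biVertices N, 2 * lam ≤ biI N (biIstar N ν) p → biI N (biIstar N ν) p ≤ 4 * lam →
          biI N (fun q => if q = (([] : List Bool), ([] : List Bool)) then (1 : ℝ) else 0) p ≤ biI N φ p) ∧
        ∑ p ∈ biVertices N, (φ p) ^ 2 ≤ C * (δ / lam) *
          ∑ p ∈ biVertices N,
            ((fun q : List Bool × List Bool => if q = (([] : List Bool), ([] : List Bool)) then (1 : ℝ) else 0) p) ^ 2 := by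
  intro C hC
  set n : ℕ := max 5 ⌈8 * C⌉₊ with hn
  have hn5 : 5 ≤ n := le_max_left _ _
  have hnC : 8 * C ≤ n := by
    calc 8 * C ≤ (⌈8 * C⌉₊ : ℝ) := Nat.le_ceil _
      _ ≤ n := by exact_mod_cast Nat.cast_le.mpr (le_max_right _ _)
  set N : ℕ := 2^n - 1 with hN
  have h2n : 1 ≤ 2^n := Nat.one_le_two_pow
  refine ⟨N, ?_, fun q => if q = (List.replicate N true, List.replicate N true) then (1:ℝ) else 0,
    ⟨fun p => by positivity, ?_⟩, 1, (2:ℝ)^(n-1), one_pos, ?_, superadd N, ?_, ?_⟩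
  · have : 2^5 ≤ 2^n := Nat.pow_le_pow_right (by norm_num) hn5
    omega
  · intro p hp
    by_cases h : p = (List.replicate N true, List.replicate N true)
    · rw [h]; simp
    · simp [h] at hp
  · have : (2:ℝ)^4 ≤ 2^(n-1) := by
      apply pow_le_pow_right₀ (by norm_num)
      omega
    norm_num at this ⊢
    linarith
  · -- support condition
    intro p _ hp
    have hproot : p = (([] : List Bool), ([] : List Bool)) := by
      by_contra h
      simp [h] at hp
    rw [hproot]
    have : ((([] : List Bool), ([] : List Bool)) : List Bool × List Bool)
        = (List.replicate 0 true, List.replicate 0 true) := rfl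
    rw [this, biV_rep N 0 0 (Nat.zero_le _) (Nat.zero_le _)]
    norm_num
  · -- the main negation
    rintro ⟨φ, hφ0, hmaj, hbound⟩
    -- notation
    set w : ℕ → List Bool × List Bool :=
      fun j => (List.replicate (2^j - 1) true, List.replicate (2^(n-j) - 1) true) with hw
    have hAle : ∀ j, j ≤ n → 2^j - 1 ≤ N := by
      intro j hj
      have := Nat.pow_le_pow_right (by norm_num : 1 ≤ 2) hj
      omega
    have hBle : ∀ j, j ≤ n → 2^(n-j) - 1 ≤ N := by
      intro j hj
      have := Nat.pow_le_pow_right (by norm_num : 1 ≤ 2) (Nat.sub_le n j)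
      omega
    have hcast : ∀ m : ℕ, ((2^m - 1 : ℕ) : ℝ) + 1 = 2^m := by
      intro m
      rw [Nat.cast_sub Nat.one_le_two_pow]
      push_cast
      ring
    -- Step A : 1 ≤ biI N φ (w j)
    have hstepA : ∀ j ∈ Finset.range (n+1), (1:ℝ) ≤ biI N φ (w j) := by
      intro j hj
      simp only [Finset.mem_range] at hj
      have hj' : j ≤ n := by omega
      have hmem : w j ∈ biVertices N := by
        simp only [hw, biVertices, Finset.mem_product, mem_strings, List.length_replicate]
        exact ⟨hAle j hj', hBle j hj'⟩
      have hV : biI N (biIstar N (fun q =>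
          if q = (List.replicate N true, List.replicate N true) then (1:ℝ) else 0)) (w j)
          = 2^n := by
        rw [hw]
        rw [biV_rep N _ _ (hAle j hj') (hBle j hj'), hcast, hcast, ← pow_add]
        congr 1
        omega
      have h2lam : 2 * (2:ℝ)^(n-1) = 2^n := by
        rw [← pow_succ']
        congr 1
        omega
      have := hmaj (w j) hmem (by rw [hV, h2lam]) (by
        rw [hV]
        nlinarith [pow_pos (show (0:ℝ) < 2 by norm_num) (n-1), h2lam])
      rwa [biI_root] at this
    -- Step B : n+1 ≤ sum
    have hstepB : ((n:ℝ)+1) ≤ ∑ j ∈ Finset.range (n+1), biI N φ (w j) := by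
      have := Finset.card_nsmul_le_sum (Finset.range (n+1)) (fun j => biI N φ (w j)) 1 hstepA
      rw [Finset.card_range, nsmul_eq_mul, mul_one] at this
      exact_mod_cast this
    -- Step C : swap
    set c : List Bool × List Bool → ℝ := fun q => ∑ j ∈ Finset.range (n+1),
      (if (q.1 <+: List.replicate (2^j - 1) true ∧ q.2 <+: List.replicate (2^(n-j) - 1) true)
        then (1:ℝ) else 0) with hc
    have hstepC : ∑ j ∈ Finset.range (n+1), biI N φ (w j)
        = ∑ q ∈ biVertices N, φ q * c q := by
      have h1 : ∀ j ∈ Finset.range (n+1), biI N φ (w j) = ∑ q ∈ biVertices N,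
          (if (q.1 <+: List.replicate (2^j - 1) true ∧ q.2 <+: List.replicate (2^(n-j) - 1) true)
            then φ q else 0) := by
        intro j _
        rw [biI, Finset.sum_filter]
      rw [Finset.sum_congr rfl h1, Finset.sum_comm]
      refine Finset.sum_congr rfl (fun q _ => ?_)
      rw [hc, Finset.mul_sum]
      refine Finset.sum_congr rfl (fun j _ => ?_)
      rw [mul_ite, mul_one, mul_zero]
    -- Step D : Cauchy-Schwarz
    have hCS := Finset.sum_mul_sq_le_sq_mul_sq (biVertices N) φ c
    -- Step E : energy bound
    have hstepE : ∑ q ∈ biVertices N, (c q)^2 ≤ ((n:ℝ)+1) * (4 * 2^n) := by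
      have hexp : ∀ q ∈ biVertices N, (c q)^2 = ∑ j ∈ Finset.range (n+1),
          ∑ j' ∈ Finset.range (n+1),
          ((if (q.1 <+: List.replicate (2^j - 1) true ∧ q.2 <+: List.replicate (2^(n-j) - 1) true)
              then (1:ℝ) else 0) *
           (if (q.1 <+: List.replicate (2^j' - 1) true ∧ q.2 <+: List.replicate (2^(n-j') - 1) true)
              then (1:ℝ) else 0)) := by
        intro q _
        rw [sq, hc, Finset.sum_mul_sum]
      rw [Finset.sum_congr rfl hexp, Finset.sum_comm]
      have hswap : ∀ j ∈ Finset.range (n+1), (∑ q ∈ biVertices N, ∑ j' ∈ Finset.range (n+1),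
          ((if (q.1 <+: List.replicate (2^j - 1) true ∧ q.2 <+: List.replicate (2^(n-j) - 1) true)
              then (1:ℝ) else 0) *
           (if (q.1 <+: List.replicate (2^j' - 1) true ∧ q.2 <+: List.replicate (2^(n-j') - 1) true)
              then (1:ℝ) else 0)))
          ≤ 4 * 2^n := by
        intro j hj
        simp only [Finset.mem_range] at hj
        rw [Finset.sum_comm]
        have heval : ∀ j' ∈ Finset.range (n+1), (∑ q ∈ biVertices N,
            ((if (q.1 <+: List.replicate (2^j - 1) true ∧ q.2 <+: List.replicate (2^(n-j) - 1) true)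
                then (1:ℝ) else 0) *
             (if (q.1 <+: List.replicate (2^j' - 1) true ∧ q.2 <+: List.replicate (2^(n-j') - 1) true)
                then (1:ℝ) else 0)))
            = (2:ℝ)^(min j j') * 2^(n - max j j') := by
          intro j' hj'
          simp only [Finset.mem_range] at hj'
          exact count_pair N n j j' (by omega) (by omega) (le_refl N)
        rw [Finset.sum_congr rfl heval]
        exact geom_bound n j (by omega)
      calc ∑ j ∈ Finset.range (n+1), (∑ q ∈ biVertices N, ∑ j' ∈ Finset.range (n+1), _)
          ≤ ∑ j ∈ Finset.range (n+1), (4 * (2:ℝ)^n) := Finset.sum_le_sum hswap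
        _ = ((n:ℝ)+1) * (4 * 2^n) := by
            rw [Finset.sum_const, Finset.card_range, nsmul_eq_mul]
            push_cast
            ring
    -- f² sum = 1
    have hf2 : ∑ p ∈ biVertices N,
        ((fun q : List Bool × List Bool =>
          if q = (([] : List Bool), ([] : List Bool)) then (1 : ℝ) else 0) p) ^ 2 = 1 := by
      have h1 : ∀ p ∈ biVertices N,
          ((if p = (([] : List Bool), ([] : List Bool)) then (1 : ℝ) else 0)) ^ 2
            = if p = (([] : List Bool), ([] : List Bool)) then (1 : ℝ) else 0 := by
        intro p _
        split_ifs <;> norm_num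
      rw [Finset.sum_congr rfl h1,
        Finset.sum_ite_eq' _ (([] : List Bool), ([] : List Bool)) (fun _ => (1:ℝ))]
      rw [if_pos]
      simp [biVertices, mem_strings]
    rw [hf2, mul_one] at hbound
    -- final arithmetic
    have hSnonneg : (0:ℝ) ≤ ∑ q ∈ biVertices N, φ q * c q := by
      rw [← hstepC]
      exact le_trans (by positivity) hstepB
    have hsq : ((n:ℝ)+1)^2 ≤ (∑ q ∈ biVertices N, φ q * c q)^2 := by
      apply pow_le_pow_left₀ (by positivity)
      rw [← hstepC]
      exact hstepB
    have hcnonneg : (0:ℝ) ≤ ∑ q ∈ biVertices N, (c q)^2 := by positivity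
    have hchain : ((n:ℝ)+1)^2 ≤ (C * (1 / 2^(n-1))) * (((n:ℝ)+1) * (4 * 2^n)) := by
      calc ((n:ℝ)+1)^2 ≤ (∑ q ∈ biVertices N, φ q * c q)^2 := hsq
        _ ≤ (∑ q ∈ biVertices N, (φ q)^2) * (∑ q ∈ biVertices N, (c q)^2) := hCS
        _ ≤ (C * (1 / 2^(n-1))) * (((n:ℝ)+1) * (4 * 2^n)) := by
            apply mul_le_mul hbound hstepE hcnonneg
            positivity
    have hpow : (2:ℝ)^n = 2 * 2^(n-1) := by
      rw [← pow_succ']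
      congr 1
      omega
    have hfin : ((n:ℝ)+1)^2 ≤ 8 * C * ((n:ℝ)+1) := by
      have h2 : (0:ℝ) < 2^(n-1) := by positivity
      calc ((n:ℝ)+1)^2 ≤ (C * (1 / 2^(n-1))) * (((n:ℝ)+1) * (4 * 2^n)) := hchain
        _ = 8 * C * ((n:ℝ)+1) := by
            rw [hpow]
            field_simp
            ring
    nlinarith [hfin, hnC, hC]
end

section
/- In the uniform diagonal construction on the bi-tree there are absolute constants C, c > 0 such that for every integer M ≥ 1 there exists n₀ with the property: for every power of two n ≥ n₀, ∑_{α∈T² : V^μ(α) ≤ C·n·2^{−M}} (𝕀*μ(α))² ≥ c·2^{−M}·n·log₂ n. -/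
open Finset

/-- Uniform diagonal construction: on the bi-tree of depth `N = n + M` with `n = 2^m`,
the probability measure `μ` puts mass `2^{−M}` at each point `ω_a = (a0ⁿ, a0ⁿ)`,
`a` a binary string of length `M`. -/
noncomputable def unifMu (M m : ℕ) : List Bool × List Bool → ℝ := fun p =>
  if p.1 = p.2 ∧ p.1.length = 2 ^ m + M ∧ p.1.drop M = List.replicate (2 ^ m) false
  then 1 / (2 : ℝ) ^ M else 0

/-!
`𝕀*μ(α, β)` is `2^{-M}` times the number of words `a` with `(α, β) ≤ ω_a`. Hence it is at least
`2^{-M}` at every grid point `(a0^j, a0^k)`, and at most `2^{-min(max(|α|,|β|), M)}`, which is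
`≤ 2^{-M} + (3/4)^{|α|+|β|}`. Summing over the `(M+j+1)(M+k+1)` vertices above a grid point bounds
the potential there by `(M+j+1)(M+k+1)·2^{-M} + 16`, so every grid point with
`(M+j+1)(M+k+1) ≤ n` lies in `{V^μ ≤ 2n·2^{-M}}`. A dyadic decomposition of this hyperbola gives
`≳ n log₂ n` such pairs `(j, k)` for each of the `2^M` words `a`, each contributing `2^{-2M}` to the
partial energy.
-/

namespace BiTree

theorem mem_strings {N : ℕ} {l : List Bool} : l ∈ strings N ↔ l.length ≤ N := by
  induction N generalizing l with
  | zero => simp [strings]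
  | succ N ih =>
    cases l with
    | nil => simp [strings]
    | cons b t => cases b <;> simp [strings, ih]

def words (K : ℕ) : Finset (List Bool) := univ.image (List.ofFn (n := K))

theorem mem_words {K : ℕ} {l : List Bool} : l ∈ words K ↔ l.length = K := by
  refine ⟨fun h => ?_, fun h => ?_⟩
  · obtain ⟨f, -, rfl⟩ := mem_image.1 h
    exact List.length_ofFn
  · subst h
    exact mem_image.2 ⟨l.get, mem_univ _, List.ofFn_get l⟩

theorem card_words (K : ℕ) : #(words K) = 2 ^ K := by
  rw [words, card_image_of_injective _ List.ofFn_injective]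
  simp

theorem card_filter_prefix_append_le {M r : ℕ} {α : List Bool} (t : List Bool)
    (hr : r ≤ α.length) (hrM : r ≤ M) :
    #{a ∈ words M | α <+: a ++ t} ≤ 2 ^ (M - r) := by
  have take_eq : ∀ a ∈ {a ∈ words M | α <+: a ++ t}, a.take r = α.take r := by
    intro a ha
    obtain ⟨ha, hpre⟩ := mem_filter.1 ha
    rw [mem_words] at ha
    rw [List.prefix_iff_eq_take.1 hpre, List.take_take, min_eq_left hr,
      List.take_append_of_le_length (by omega)]
  rw [← card_words]
  refine card_le_card_of_injOn (fun a => a.drop r) (fun a ha => ?_) (fun a ha b hb hab => ?_)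
  · have ha := mem_words.1 (mem_filter.1 ha).1
    simp [mem_words, ha]
  · rw [← List.take_append_drop r a, ← List.take_append_drop r b, take_eq a ha, take_eq b hb]
    exact congrArg _ hab

/-- `(a0^j, a0^k)`; in particular `ω_a = gridPoint a (n, n)`. -/
def gridPoint (a : List Bool) (jk : ℕ × ℕ) : List Bool × List Bool :=
  (a ++ List.replicate jk.1 false, a ++ List.replicate jk.2 false)

theorem unifMu_eq_sum (M m : ℕ) (q : List Bool × List Bool) :
    unifMu M m q = ∑ a ∈ words M, if gridPoint a (2 ^ m, 2 ^ m) = q then 1 / 2 ^ M else 0 := by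
  unfold unifMu gridPoint
  split_ifs with hq
  · obtain ⟨hdiag, hlen, hdrop⟩ := hq
    have point_iff : ∀ a ∈ words M,
        (a ++ List.replicate (2 ^ m) false, a ++ List.replicate (2 ^ m) false) = q ↔
          a = q.1.take M := by
      intro a ha
      rw [mem_words] at ha
      constructor
      · rintro rfl
        simp [ha]
      · rintro rfl
        rw [← hdrop, List.take_append_drop]
        exact Prod.ext rfl hdiag
    rw [sum_congr rfl fun a ha => by rw [if_congr (point_iff a ha) rfl rfl], sum_ite_eq',
      if_pos (mem_words.2 (by simp [hlen]))]
  · refine (sum_eq_zero fun a ha => if_neg ?_).symm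
    rintro rfl
    exact hq ⟨rfl, by simp [mem_words.1 ha]; omega, by simp [mem_words.1 ha]⟩

theorem biIstar_unifMu (M m : ℕ) (p : List Bool × List Bool) :
    biIstar (2 ^ m + M) (unifMu M m) p =
      #{a ∈ words M | p.1 <+: a ++ List.replicate (2 ^ m) false ∧
        p.2 <+: a ++ List.replicate (2 ^ m) false} / 2 ^ M := by
  simp_rw [biIstar, unifMu_eq_sum]
  rw [sum_comm]
  simp_rw [sum_ite_eq]
  rw [← sum_filter, sum_const, nsmul_eq_mul, mul_one_div]
  congr 3
  refine filter_congr fun a ha => ?_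
  have hvert : gridPoint a (2 ^ m, 2 ^ m) ∈ biVertices (2 ^ m + M) := by
    simp [biVertices, gridPoint, mem_strings, mem_words.1 ha, add_comm]
  rw [mem_filter, and_iff_right hvert]
  rfl

theorem biIstar_unifMu_le_of_le_length {M m r : ℕ} {p : List Bool × List Bool}
    (hr : r ≤ p.1.length ∨ r ≤ p.2.length) (hrM : r ≤ M) :
    biIstar (2 ^ m + M) (unifMu M m) p ≤ 1 / 2 ^ r := by
  have hcount : #{a ∈ words M | p.1 <+: a ++ List.replicate (2 ^ m) false ∧
      p.2 <+: a ++ List.replicate (2 ^ m) false} ≤ 2 ^ (M - r) := by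
    rcases hr with hr | hr
    · exact (card_le_card (monotone_filter_right _ fun _ _ h => h.1)).trans
        (card_filter_prefix_append_le _ hr hrM)
    · exact (card_le_card (monotone_filter_right _ fun _ _ h => h.2)).trans
        (card_filter_prefix_append_le _ hr hrM)
  rw [biIstar_unifMu, div_le_div_iff₀ (by positivity) (by positivity), one_mul]
  calc (#_ : ℝ) * 2 ^ r ≤ 2 ^ (M - r) * 2 ^ r := by gcongr; exact_mod_cast hcount
    _ = 2 ^ M := by rw [← pow_add, Nat.sub_add_cancel hrM]

theorem one_div_two_pow_max_le (i j : ℕ) : 1 / 2 ^ max i j ≤ (3 / 4 : ℝ) ^ i * (3 / 4) ^ j := by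
  have antitone_pow : ∀ k ≤ max i j, (3 / 4 : ℝ) ^ max i j ≤ (3 / 4) ^ k := fun k hk =>
    pow_le_pow_of_le_one (by norm_num) (by norm_num) hk
  calc (1 : ℝ) / 2 ^ max i j = (1 / 2) ^ max i j := by rw [one_div_pow]
    _ ≤ (3 / 4 * (3 / 4)) ^ max i j := pow_le_pow_left₀ (by norm_num) (by norm_num) _
    _ = (3 / 4) ^ max i j * (3 / 4) ^ max i j := mul_pow _ _ _
    _ ≤ (3 / 4) ^ i * (3 / 4) ^ j :=
      mul_le_mul (antitone_pow i (le_max_left i j)) (antitone_pow j (le_max_right i j))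
        (by positivity) (by positivity)

theorem biIstar_unifMu_le (M m : ℕ) (p : List Bool × List Bool) :
    biIstar (2 ^ m + M) (unifMu M m) p ≤
      1 / 2 ^ M + (3 / 4) ^ p.1.length * (3 / 4) ^ p.2.length := by
  have hM : 0 ≤ 1 / (2 : ℝ) ^ M := by positivity
  have hp : 0 ≤ (3 / 4 : ℝ) ^ p.1.length * (3 / 4) ^ p.2.length := by positivity
  rcases le_total M (max p.1.length p.2.length) with h | h
  · linarith [biIstar_unifMu_le_of_le_length (m := m) (le_max_iff.1 h) le_rfl]
  · linarith [biIstar_unifMu_le_of_le_length (m := m) (p := p) (le_max_iff.1 le_rfl) h,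
      one_div_two_pow_max_le p.1.length p.2.length]

theorem one_div_two_pow_le_biIstar_unifMu {M m : ℕ} {a : List Bool} (ha : a.length = M)
    {jk : ℕ × ℕ} (hj : jk.1 ≤ 2 ^ m) (hk : jk.2 ≤ 2 ^ m) :
    1 / 2 ^ M ≤ biIstar (2 ^ m + M) (unifMu M m) (gridPoint a jk) := by
  have replicate_prefix : ∀ i ≤ 2 ^ m,
      a ++ List.replicate i false <+: a ++ List.replicate (2 ^ m) false := fun i hi =>
    (List.prefix_append_right_inj a).2
      ⟨List.replicate (2 ^ m - i) false, by rw [← List.replicate_add, Nat.add_sub_cancel' hi]⟩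
  have hmem : a ∈ {a' ∈ words M | (gridPoint a jk).1 <+: a' ++ List.replicate (2 ^ m) false ∧
      (gridPoint a jk).2 <+: a' ++ List.replicate (2 ^ m) false} :=
    mem_filter.2 ⟨mem_words.2 ha, replicate_prefix _ hj, replicate_prefix _ hk⟩
  rw [biIstar_unifMu]
  gcongr
  exact_mod_cast card_pos.2 ⟨a, hmem⟩

theorem biI_eq_sum_take {N : ℕ} (f : List Bool × List Bool → ℝ) {p : List Bool × List Bool}
    (h1 : p.1.length ≤ N) (h2 : p.2.length ≤ N) :
    biI N f p = ∑ i ∈ range (p.1.length + 1), ∑ j ∈ range (p.2.length + 1),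
      f (p.1.take i, p.2.take j) := by
  have prefix_iff : ∀ q l : List Bool, q <+: l ↔ ∃ i < l.length + 1, l.take i = q :=
    fun q l => ⟨fun h => ⟨q.length, Nat.lt_succ_of_le h.length_le,
      (List.prefix_iff_eq_take.1 h).symm⟩, fun ⟨i, _, hi⟩ => hi ▸ List.take_prefix i l⟩
  have hfilter : {q ∈ biVertices N | q.1 <+: p.1 ∧ q.2 <+: p.2} =
      (range (p.1.length + 1) ×ˢ range (p.2.length + 1)).image
        fun ij => (p.1.take ij.1, p.2.take ij.2) := by
    ext ⟨q₁, q₂⟩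
    simp only [mem_filter, mem_image, mem_product, mem_range, Prod.mk.injEq, Prod.exists,
      biVertices, mem_strings]
    constructor
    · rintro ⟨-, hq₁, hq₂⟩
      obtain ⟨i, hi, rfl⟩ := (prefix_iff q₁ p.1).1 hq₁
      obtain ⟨j, hj, rfl⟩ := (prefix_iff q₂ p.2).1 hq₂
      exact ⟨i, j, ⟨hi, hj⟩, rfl, rfl⟩
    · rintro ⟨i, j, ⟨hi, hj⟩, rfl, rfl⟩
      simp only [List.length_take]
      exact ⟨⟨by omega, by omega⟩, List.take_prefix i _, List.take_prefix j _⟩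
  rw [biI, hfilter, sum_image, sum_product]
  rintro ⟨i, j⟩ hij ⟨i', j'⟩ hij' heq
  simp only [coe_product, Set.mem_prod, coe_range, Set.mem_Iio, Prod.mk.injEq] at hij hij' heq
  have hi := congrArg List.length heq.1
  have hj := congrArg List.length heq.2
  simp only [List.length_take] at hi hj
  ext <;> simp only <;> omega

theorem sum_range_three_quarters_pow_le (K : ℕ) : ∑ i ∈ range K, (3 / 4 : ℝ) ^ i ≤ 4 := by
  have h := geom_sum_Ico_le_of_lt_one (m := 0) (n := K) (x := (3 / 4 : ℝ)) (by norm_num)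
    (by norm_num)
  rw [← range_eq_Ico] at h
  norm_num at h
  exact h

theorem biV_unifMu_gridPoint_le {M m : ℕ} {a : List Bool} (ha : a.length = M) {jk : ℕ × ℕ}
    (hj : jk.1 ≤ 2 ^ m) (hk : jk.2 ≤ 2 ^ m) :
    biV (2 ^ m + M) (unifMu M m) (gridPoint a jk) ≤
      ((M + jk.1 + 1) * (M + jk.2 + 1) : ℕ) / 2 ^ M + 16 := by
  have hlen₁ : (gridPoint a jk).1.length = M + jk.1 := by simp [gridPoint, ha]
  have hlen₂ : (gridPoint a jk).2.length = M + jk.2 := by simp [gridPoint, ha]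
  have hterm : ∀ l : List Bool, ∀ i ∈ range (l.length + 1), (l.take i).length = i :=
    fun l i hi => List.length_take_of_le (Nat.lt_succ_iff.1 (mem_range.1 hi))
  have hgeom : (∑ i ∈ range (M + jk.1 + 1), (3 / 4 : ℝ) ^ i) *
      ∑ j ∈ range (M + jk.2 + 1), (3 / 4 : ℝ) ^ j ≤ 4 * 4 :=
    mul_le_mul (sum_range_three_quarters_pow_le _) (sum_range_three_quarters_pow_le _)
      (by positivity) (by norm_num)
  rw [biV, biI_eq_sum_take _ (by omega) (by omega)]
  calc _ ≤ ∑ i ∈ range ((gridPoint a jk).1.length + 1),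
        ∑ j ∈ range ((gridPoint a jk).2.length + 1), (1 / 2 ^ M + (3 / 4 : ℝ) ^ i * (3 / 4) ^ j) :=
        sum_le_sum fun i hi => sum_le_sum fun j hj => by
          simpa only [hterm _ i hi, hterm _ j hj] using biIstar_unifMu_le M m
            ((gridPoint a jk).1.take i, (gridPoint a jk).2.take j)
    _ = ((M + jk.1 + 1) * (M + jk.2 + 1) : ℕ) / 2 ^ M +
        (∑ i ∈ range (M + jk.1 + 1), (3 / 4 : ℝ) ^ i) *
          ∑ j ∈ range (M + jk.2 + 1), (3 / 4 : ℝ) ^ j := by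
        simp only [sum_add_distrib, sum_mul_sum, sum_const, card_range, nsmul_eq_mul, hlen₁,
          hlen₂]
        push_cast
        ring
    _ ≤ _ := by linarith

theorem card_mul_sq_le_biPartialEnergy {N : ℕ} {ν : List Bool × List Bool → ℝ} {ε b : ℝ}
    {T : Finset (List Bool × List Bool)} (hT : T ⊆ biVertices N) (hV : ∀ p ∈ T, biV N ν p ≤ ε)
    (hb : 0 ≤ b) (hI : ∀ p ∈ T, b ≤ biIstar N ν p) :
    #T * b ^ 2 ≤ biPartialEnergy N ν ε := by
  have hsub : T ⊆ {p ∈ biVertices N | biV N ν p ≤ ε} := fun p hp => mem_filter.2 ⟨hT hp, hV p hp⟩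
  calc (#T : ℝ) * b ^ 2 = ∑ _p ∈ T, b ^ 2 := by rw [sum_const, nsmul_eq_mul]
    _ ≤ ∑ p ∈ T, biIstar N ν p ^ 2 := sum_le_sum fun p hp => pow_le_pow_left₀ hb (hI p hp) 2
    _ ≤ biPartialEnergy N ν ε := sum_le_sum_of_subset_of_nonneg hsub fun _ _ _ => sq_nonneg _

/-- For `|a| = M`, `(M + j + 1) * (M + k + 1)` is the number of vertices `≥ gridPoint a (j, k)`. -/
def hyperbolaPairs (M n : ℕ) : Finset (ℕ × ℕ) :=
  {jk ∈ range n ×ˢ range n | (M + jk.1 + 1) * (M + jk.2 + 1) ≤ n}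

theorem two_pow_le_card_hyperbolaPairs_fiber {M m s : ℕ} (hMs : M ≤ s) (hsm : s + M + 2 ≤ m) :
    2 ^ (m - 2) ≤ #{jk ∈ hyperbolaPairs M (2 ^ m) | Nat.log 2 (M + 1 + jk.1) = s} := by
  have hA : M + 1 ≤ 2 ^ s := (Nat.lt_two_pow_self).trans_le (Nat.pow_le_pow_right two_pos hMs)
  have hB : M + 1 ≤ 2 ^ (m - s - 2) :=
    (Nat.lt_two_pow_self).trans_le (Nat.pow_le_pow_right two_pos (by omega))
  have h2A : 2 ^ (s + 1) = 2 * 2 ^ s := by ring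
  have h2B : 2 ^ (m - s - 1) = 2 * 2 ^ (m - s - 2) := by rw [← pow_succ']; congr 1; omega
  have hm : 2 ^ m = 2 ^ (s + 1) * 2 ^ (m - s - 1) := by rw [← pow_add]; congr 1; omega
  calc 2 ^ (m - 2) = #(range (2 ^ s) ×ˢ range (2 ^ (m - s - 2))) := by
        rw [card_product, card_range, card_range, ← pow_add]; congr 1; omega
    _ ≤ _ := by
      refine card_le_card_of_injOn (fun tk => (2 ^ s + tk.1 - (M + 1), tk.2)) ?_ ?_
      · rintro ⟨t, k⟩ htk
        simp only [coe_product, coe_range, Set.mem_prod, Set.mem_Iio] at htk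
        have hprod : (M + (2 ^ s + t - (M + 1)) + 1) * (M + k + 1) ≤ 2 ^ m :=
          hm ▸ Nat.mul_le_mul (by omega) (by omega)
        simp only [coe_filter, hyperbolaPairs, mem_filter, mem_product, mem_range,
          Set.mem_ofPred_eq]
        refine ⟨⟨⟨?_, ?_⟩, hprod⟩, Nat.log_eq_of_pow_le_of_lt_pow (by omega) (by omega)⟩
        · nlinarith
        · nlinarith
      · rintro ⟨t, k⟩ - ⟨t', k'⟩ - heq
        simp only [Prod.mk.injEq] at heq ⊢
        omega

theorem card_hyperbolaPairs_ge (M m : ℕ) :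
    (m - 2 * M - 1) * 2 ^ (m - 2) ≤ #(hyperbolaPairs M (2 ^ m)) := by
  calc (m - 2 * M - 1) * 2 ^ (m - 2) = ∑ _s ∈ Ico M (m - M - 1), 2 ^ (m - 2) := by
        rw [sum_const, Nat.card_Ico, smul_eq_mul]; congr 1; omega
    _ ≤ ∑ s ∈ Ico M (m - M - 1),
        #{jk ∈ hyperbolaPairs M (2 ^ m) | Nat.log 2 (M + 1 + jk.1) = s} :=
      sum_le_sum fun s hs => two_pow_le_card_hyperbolaPairs_fiber (mem_Ico.1 hs).1
        (by have := mem_Ico.1 hs; omega)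
    _ ≤ _ := by rw [sum_card_fiberwise_eq_card_filter]; exact card_filter_le _ _

theorem gridPoint_injOn (M : ℕ) :
    Set.InjOn (fun x : List Bool × ℕ × ℕ => gridPoint x.1 x.2) {x | x.1.length = M} := by
  rintro ⟨a, j, k⟩ ha ⟨a', j', k'⟩ ha' heq
  simp only [gridPoint, Prod.mk.injEq] at heq
  obtain ⟨rfl, hj⟩ := List.append_inj heq.1 (ha.trans ha'.symm)
  have hk := List.append_cancel_left heq.2
  simp only [List.replicate_inj] at hj hk
  rw [hj.1, hk.1]

theorem biV_unifMu_gridPoint_le_of_mem {M m : ℕ} (hm : M + 4 ≤ m) {a : List Bool}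
    (ha : a.length = M) {jk : ℕ × ℕ} (hjk : jk ∈ hyperbolaPairs M (2 ^ m)) :
    biV (2 ^ m + M) (unifMu M m) (gridPoint a jk) ≤ 2 * 2 ^ m / 2 ^ M := by
  obtain ⟨hrange, hprod⟩ := mem_filter.1 hjk
  simp only [mem_product, mem_range] at hrange
  have h16 : (16 : ℝ) ≤ 2 ^ m / 2 ^ M := by
    rw [le_div_iff₀ (by positivity)]
    calc (16 : ℝ) * 2 ^ M = 2 ^ (M + 4) := by ring
      _ ≤ 2 ^ m := pow_le_pow_right₀ (by norm_num) hm
  have hprod : ((M + jk.1 + 1) * (M + jk.2 + 1) : ℕ) / (2 : ℝ) ^ M ≤ 2 ^ m / 2 ^ M := by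
    gcongr
    exact_mod_cast hprod
  calc _ ≤ ((M + jk.1 + 1) * (M + jk.2 + 1) : ℕ) / (2 : ℝ) ^ M + 16 :=
        biV_unifMu_gridPoint_le ha hrange.1.le hrange.2.le
    _ ≤ 2 * 2 ^ m / 2 ^ M := by linarith [show (2 * 2 ^ m / 2 ^ M : ℝ) = 2 ^ m / 2 ^ M * 2 by ring]

theorem card_hyperbolaPairs_div_le_biPartialEnergy {M m : ℕ} (hm : M + 4 ≤ m) :
    #(hyperbolaPairs M (2 ^ m)) / 2 ^ M ≤
      biPartialEnergy (2 ^ m + M) (unifMu M m) (2 * 2 ^ m / 2 ^ M) := by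
  set G := words M ×ˢ hyperbolaPairs M (2 ^ m)
  have hG : ∀ x ∈ G, x.1.length = M ∧ x.2 ∈ hyperbolaPairs M (2 ^ m) ∧
      x.2.1 ≤ 2 ^ m ∧ x.2.2 ≤ 2 ^ m := by
    intro x hx
    obtain ⟨ha, hjk⟩ := mem_product.1 hx
    have hrange := (mem_product.1 (mem_filter.1 hjk).1)
    exact ⟨mem_words.1 ha, hjk, (mem_range.1 hrange.1).le, (mem_range.1 hrange.2).le⟩
  have hcard : #(G.image fun x => gridPoint x.1 x.2) = 2 ^ M * #(hyperbolaPairs M (2 ^ m)) := by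
    rw [card_image_of_injOn ((gridPoint_injOn M).mono fun x hx => (hG x hx).1), card_product,
      card_words]
  have key := card_mul_sq_le_biPartialEnergy (N := 2 ^ m + M) (ν := unifMu M m)
    (b := 1 / 2 ^ M) (T := G.image fun x => gridPoint x.1 x.2)
    (fun p hp => by
      obtain ⟨x, hx, rfl⟩ := mem_image.1 hp
      obtain ⟨ha, -, hj, hk⟩ := hG x hx
      simp [biVertices, gridPoint, mem_strings, ha]
      omega)
    (fun p hp => by
      obtain ⟨x, hx, rfl⟩ := mem_image.1 hp
      exact biV_unifMu_gridPoint_le_of_mem hm (hG x hx).1 (hG x hx).2.1)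
    (by positivity)
    (fun p hp => by
      obtain ⟨x, hx, rfl⟩ := mem_image.1 hp
      obtain ⟨ha, -, hj, hk⟩ := hG x hx
      exact one_div_two_pow_le_biIstar_unifMu ha hj hk)
  rw [hcard] at key
  convert key using 1
  push_cast
  field_simp

end BiTree

open BiTree in
/-- **Lower bound on the partial energy in the uniform diagonal construction**:
`∑_{α : V^μ(α) ≤ C·n·2^{−M}} (𝕀*μ(α))² ≥ c·2^{−M}·n·log₂ n` with `n = 2^m`. -/
theorem stmt19 : ∃ C c : ℝ, 0 < C ∧ 0 < c ∧ ∀ M : ℕ, 1 ≤ M → ∃ n₀ : ℕ, ∀ m : ℕ, n₀ ≤ 2 ^ m →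
    c * (2 : ℝ) ^ m * (m : ℝ) / (2 : ℝ) ^ M ≤
      biPartialEnergy (2 ^ m + M) (unifMu M m) (C * (2 : ℝ) ^ m / (2 : ℝ) ^ M) := by
  refine ⟨2, 1 / 8, by norm_num, by norm_num, fun M _ => ⟨2 ^ (4 * M + 4), fun m hm => ?_⟩⟩
  have hm : 4 * M + 4 ≤ m := (Nat.pow_le_pow_iff_right (by norm_num)).1 hm
  have hcount : m * 2 ^ m ≤ 8 * #(hyperbolaPairs M (2 ^ m)) :=
    calc m * 2 ^ m = m * 4 * 2 ^ (m - 2) := by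
          rw [mul_assoc, show 4 = 2 ^ 2 from rfl, ← pow_add]; congr 2; omega
      _ ≤ 8 * (m - 2 * M - 1) * 2 ^ (m - 2) := Nat.mul_le_mul_right _ (by omega)
      _ ≤ 8 * #(hyperbolaPairs M (2 ^ m)) := by
          rw [mul_assoc]; exact Nat.mul_le_mul_left 8 (card_hyperbolaPairs_ge M m)
  calc 1 / 8 * (2 : ℝ) ^ m * m / 2 ^ M ≤ #(hyperbolaPairs M (2 ^ m)) / 2 ^ M := by
        gcongr
        have : (m * 2 ^ m : ℝ) ≤ 8 * #(hyperbolaPairs M (2 ^ m)) := by exact_mod_cast hcount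
        linarith
    _ ≤ _ := card_hyperbolaPairs_div_le_biPartialEnergy (by omega)
end
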